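/- arXiv:1307.7896 — 2 statements merged into one kernel-verified Lean document; each statement's English description precedes it below -/
import Mathlib

section
/- The vector v₁ = 1 ⊗ v_{∅,∅} ⊗ e^{−α} ∈ V satisfies X(0)v₁ = 0, Y(1)v₁ = 0, X(−1)v₁ = 0, H(0)v₁ = −2v₁, and d·v₁ = −(1/2)v₁; hence v₁ is a highest weight vector for the representation π of affine sl₂ at the critical level c = −2, of weight −2Λ₁ − (1/2)δ (the Chevalley generators act by e₀v₁ = Y(1)v₁ = 0, e₁v₁ = X(0)v₁ = 0, f₀v₁ = X(−1)v₁ = 0, h₀v₁ = (−H(0)+c)v₁ = 0, h₁v₁ = H(0)v₁ = −2v₁). -/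
open MvPolynomial

/-- The semi-infinite wedge space `Λ`: complex vector space with basis `v_{S,T}`
indexed by pairs `(S, T)` of finite subsets of the positive integers.  The basis
vector `v_{S,T}` encodes the semi-infinite wedge product with support
`supp(S,T) = {-s-1/2 : s ∈ S} ∪ {-1/2} ∪ {k+1/2 : k ∈ ℤ_{≥1}, k ∉ T} ⊆ ℤ + 1/2`. -/
abbrev Wedge : Type := (Finset ℕ+ × Finset ℕ+) →₀ ℂ

/-- Image of the basis vector `v_{S,T}` under the operator `A(m)` (for `m ∈ ℤ + 1/2`,
i.e. a rational with denominator `2`; `A(m) := 0` for other rationals).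
`A(m) v_{S,T} = 0` if `m ∈ supp(S,T)` or `m = 1/2`; otherwise
`A(m) v_{S,T} = (m - 1/2) ⬝ (-1)^j ⬝ v_{S',T'}` where `j = #{i ∈ supp(S,T) : i < m}`
and `supp(S',T') = supp(S,T) ∪ {m}`.  Writing `m = n + 1/2` with `n = ⌊m⌋ ∈ ℤ`:
if `n ≥ 1` then `m ∈ supp(S,T)` iff `n ∉ T`, and the new support corresponds to
`(S, T \ {n})` with sign exponent `j = |S| + n - #{t ∈ T : t < n}`;
if `n ≤ -2` then `m = -s - 1/2` with `s = -n-1 ≥ 1`, `m ∈ supp(S,T)` iff `s ∈ S`,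
and the new support corresponds to `(S ∪ {s}, T)` with `j = #{s' ∈ S : s' > s}`;
if `n = 0` (`m = 1/2`) or `n = -1` (`m = -1/2 ∈ supp(S,T)`) the result is `0`. -/
noncomputable def Abasis (m : ℚ) (ST : Finset ℕ+ × Finset ℕ+) : Wedge :=
  if m.den = 2 then
    let n : ℤ := ⌊m⌋
    if hn : 1 ≤ n then
      let k : ℕ+ := ⟨n.toNat, by omega⟩
      if k ∈ ST.2 then
        (((n : ℂ)) * (-1) ^ (ST.1.card + n.toNat - (ST.2.filter (· < k)).card)) •
          Finsupp.single (ST.1, ST.2.erase k) (1 : ℂ)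
      else 0
    else if hn' : n ≤ -2 then
      let s : ℕ+ := ⟨(-n - 1).toNat, by omega⟩
      if s ∈ ST.1 then 0
      else
        (((n : ℂ)) * (-1) ^ ((ST.1.filter (s < ·)).card)) •
          Finsupp.single (insert s ST.1, ST.2) (1 : ℂ)
    else 0
  else 0

/-- Image of the basis vector `v_{S,T}` under the operator `A*(m)` (for `m ∈ ℤ + 1/2`).
`A*(m) v_{S,T} = 0` if `-m ∉ supp(S,T)` or `m = 1/2`; otherwise
`A*(m) v_{S,T} = (m - 1/2) ⬝ (-1)^{j'} ⬝ v_{S'',T''}` where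
`j' = #{i ∈ supp(S,T) : i < -m}` and `supp(S'',T'') = supp(S,T) \ {-m}`.
Writing `m = n + 1/2`, `n = ⌊m⌋`: if `n ≥ 1` then `-m = -n - 1/2 ∈ supp(S,T)` iff
`n ∈ S`, new pair `(S \ {n}, T)`, `j' = #{s' ∈ S : s' > n}`; if `n ≤ -2` then
`-m = k + 1/2` with `k = -n-1 ≥ 1`, `-m ∈ supp(S,T)` iff `k ∉ T`, new pair
`(S, T ∪ {k})`, `j' = |S| + k - #{t ∈ T : t < k}`; otherwise `0`. -/
noncomputable def AstarBasis (m : ℚ) (ST : Finset ℕ+ × Finset ℕ+) : Wedge :=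
  if m.den = 2 then
    let n : ℤ := ⌊m⌋
    if hn : 1 ≤ n then
      let s : ℕ+ := ⟨n.toNat, by omega⟩
      if s ∈ ST.1 then
        (((n : ℂ)) * (-1) ^ ((ST.1.filter (s < ·)).card)) •
          Finsupp.single (ST.1.erase s, ST.2) (1 : ℂ)
      else 0
    else if hn' : n ≤ -2 then
      let k : ℕ+ := ⟨(-n - 1).toNat, by omega⟩
      if k ∈ ST.2 then 0
      else
        (((n : ℂ)) * (-1) ^ (ST.1.card + (-n - 1).toNat - (ST.2.filter (· < k)).card)) •
          Finsupp.single (ST.1, insert k ST.2) (1 : ℂ)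
    else 0
  else 0

/-- The operator `A(m)` on the semi-infinite wedge space `Λ`, extended linearly. -/
noncomputable def Aop (m : ℚ) : Wedge →ₗ[ℂ] Wedge :=
  Finsupp.lsum ℂ fun ST => LinearMap.toSpanSingleton ℂ Wedge (Abasis m ST)

/-- The operator `A*(m)` on the semi-infinite wedge space `Λ`, extended linearly. -/
noncomputable def AstarOp (m : ℚ) : Wedge →ₗ[ℂ] Wedge :=
  Finsupp.lsum ℂ fun ST => LinearMap.toSpanSingleton ℂ Wedge (AstarBasis m ST)

/-- The Fock space `F = ℂ[x_1, x_2, ...]`, a polynomial ring in countably many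
variables indexed by the positive integers. -/
abbrev Fock : Type := MvPolynomial ℕ+ ℂ

/-- Endomorphisms of the Fock space. -/
abbrev EndF : Type := Module.End ℂ Fock

/-- The Heisenberg operators on the Fock space: `H(-n)` is multiplication by `x_n`
and `H(n) = -4n ∂/∂x_n` for `n ≥ 1` (and `0` for `n = 0`, which is never used). -/
noncomputable def HF (n : ℤ) : EndF :=
  if hn : 1 ≤ n then ((-4 : ℂ) * (n : ℂ)) • (pderiv (⟨n.toNat, by omega⟩ : ℕ+)).toLinearMap
  else if hn' : n ≤ -1 then LinearMap.mulLeft ℂ (X (⟨(-n).toNat, by omega⟩ : ℕ+))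
  else 0

/-- `sgn true = -1`, `sgn false = 1`: the sign `∓` attached to the label `ε ∈ {+, -}`
(`ε = +` is `true`), as in `E^±_+(z) = exp(∓ Σ_{n>0} x_n z^n / (2n))`. -/
def sgn (ε : Bool) : ℂ := if ε then -1 else 1

/-- The coefficient of `z^k` in the exponential `exp(g(z)) = Σ_j g(z)^j / j!` of an
operator-valued formal power series `g` (with zero constant term, so that only the
terms `j ≤ k` contribute to the coefficient of `z^k`). -/
noncomputable def expCoeff (g : PowerSeries EndF) (k : ℕ) : EndF :=
  ∑ j ∈ Finset.range (k + 1), ((j.factorial : ℂ))⁻¹ • (PowerSeries.coeff k (g ^ j))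

/-- The series `∓ Σ_{n > 0} x_n z^n / (2n)` (multiplication operators). -/
noncomputable def dSeries (ε : Bool) : PowerSeries EndF :=
  PowerSeries.mk fun n =>
    if hn : 0 < n then sgn ε • (((2 * n : ℂ))⁻¹ • LinearMap.mulLeft ℂ (X (⟨n, hn⟩ : ℕ+)))
    else 0

/-- The series `∓ 2 Σ_{n > 0} (∂/∂x_n) w^n`, where `w` stands for `z^{-1}`. -/
noncomputable def cSeries (ε : Bool) : PowerSeries EndF :=
  PowerSeries.mk fun n =>
    if hn : 0 < n then sgn ε • ((2 : ℂ) • (pderiv (⟨n, hn⟩ : ℕ+)).toLinearMap)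
    else 0

/-- `d^ε_l`, the coefficient of `z^l` in `E^ε_+(z) = exp(∓ Σ_{n>0} x_n z^n/(2n))`. -/
noncomputable def dOp (ε : Bool) (l : ℕ) : EndF := expCoeff (dSeries ε) l

/-- `c^ε_k`, the coefficient of `z^{-k}` in `E^ε_-(z) = exp(∓ 2 Σ_{n>0} (∂/∂x_n) z^{-n})`. -/
noncomputable def cOp (ε : Bool) (k : ℕ) : EndF := expCoeff (cSeries ε) k

/-- The space `V = F ⊗ Λ ⊗ ℂ[ℤα]`, realized as finitely supported functions from
the basis `{v_{S,T} ⊗ e^{pα}}` of `Λ ⊗ ℂ[ℤα]` to the Fock space `F`: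
the index `((S,T), p)` records the basis vector `v_{S,T} ⊗ e^{pα}` and the value
is the `F`-coordinate, so `Finsupp.single ((S,T), p) f` is `f ⊗ v_{S,T} ⊗ e^{pα}`. -/
abbrev VV : Type := ((Finset ℕ+ × Finset ℕ+) × ℤ) →₀ Fock

/-- `emb w p f` is the element `f ⊗ w ⊗ e^{pα}` of `V` for `w ∈ Λ`. -/
noncomputable def emb (w : Wedge) (p : ℤ) (f : Fock) : VV :=
  w.sum fun ST c => Finsupp.single (ST, p) (c • f)

/-- The operator `X(m)` of the representation `π` on `V`:
`X(m)(f ⊗ v_{S,T} ⊗ e^{pα}) = Σ_{l,k ≥ 0} (d^+_l c^+_k f) ⊗ A(m+l-k-p-1/2) v_{S,T} ⊗ e^{(p+1)α}`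
(only finitely many summands are nonzero on each vector). -/
noncomputable def Xop (m : ℤ) : VV → VV := fun u =>
  u.sum fun STp f =>
    ∑ᶠ lk : ℕ × ℕ,
      emb (Abasis ((m : ℚ) + lk.1 - lk.2 - STp.2 - 1/2) STp.1) (STp.2 + 1)
        (dOp true lk.1 (cOp true lk.2 f))

/-- The operator `Y(m)` of the representation `π` on `V`:
`Y(m)(f ⊗ v_{S,T} ⊗ e^{pα}) = Σ_{l,k ≥ 0} (d^-_l c^-_k f) ⊗ A*(m+l-k+p-1/2) v_{S,T} ⊗ e^{(p-1)α}`. -/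
noncomputable def Yop (m : ℤ) : VV → VV := fun u =>
  u.sum fun STp f =>
    ∑ᶠ lk : ℕ × ℕ,
      emb (AstarBasis ((m : ℚ) + lk.1 - lk.2 + STp.2 - 1/2) STp.1) (STp.2 - 1)
        (dOp false lk.1 (cOp false lk.2 f))

/-- The operator `H(m)` of the representation `π` on `V`: for `m ≠ 0` it acts as
`H(m)` on the Fock factor, and `H(0)` acts on `f ⊗ v ⊗ e^{pα}` by the scalar `2p`. -/
noncomputable def HVop (m : ℤ) : VV → VV := fun u =>
  u.sum fun STp f =>
    Finsupp.single STp (if m = 0 then ((2 : ℂ) * (STp.2 : ℂ)) • f else HF m f)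

/-- The weight of a monomial `x₁^{a₁} x₂^{a₂} ⋯`, namely `Σ n aₙ`. -/
def wtMon (μ : ℕ+ →₀ ℕ) : ℚ := μ.sum fun n a => (n : ℚ) * a

/-- The degree of the basis vector `v_{S,T}` of `Λ`: `Σ_{s∈S} s + Σ_{t∈T} t`. -/
def degWedge (ST : Finset ℕ+ × Finset ℕ+) : ℚ :=
  (∑ s ∈ ST.1, (s : ℚ)) + ∑ t ∈ ST.2, (t : ℚ)

/-- The degree operator `d` of the representation `π` on `V`:
`d (f ⊗ v_{S,T} ⊗ e^{pα}) = (-wt(f) - deg(v_{S,T}) - p²/2) ⬝ (f ⊗ v_{S,T} ⊗ e^{pα})`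
on monomials `f`. -/
noncomputable def dV : VV → VV := fun u =>
  u.sum fun STp f =>
    Finsupp.single STp
      (∑ μ ∈ f.support,
        monomial μ
          ((((-(wtMon μ) - degWedge STp.1 - (STp.2 : ℚ) ^ 2 / 2 : ℚ) : ℂ)) * coeff μ f))

/-- The vacuum space `Ω = Λ ⊗ ℂ[ℤα]`, with basis `{v_{S,T} ⊗ e^{pα}}`. -/
abbrev Vac : Type := ((Finset ℕ+ × Finset ℕ+) × ℤ) →₀ ℂ

/-- `embVac w p` is the element `w ⊗ e^{pα}` of `Ω` for `w ∈ Λ`. -/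
noncomputable def embVac (w : Wedge) (p : ℤ) : Vac :=
  w.sum fun ST c => Finsupp.single (ST, p) c

/-- The operator `Z⁺(m)` on `Ω`: `Z⁺(m)(v ⊗ e^{pα}) = A(m-p-1/2)v ⊗ e^{(p+1)α}`. -/
noncomputable def Zplus (m : ℤ) : Vac → Vac := fun u =>
  u.sum fun STp c => c • embVac (Abasis ((m : ℚ) - STp.2 - 1/2) STp.1) (STp.2 + 1)

/-- The operator `Z⁻(m)` on `Ω`: `Z⁻(m)(v ⊗ e^{pα}) = A*(m+p-1/2)v ⊗ e^{(p-1)α}`. -/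
noncomputable def Zminus (m : ℤ) : Vac → Vac := fun u =>
  u.sum fun STp c => c • embVac (AstarBasis ((m : ℚ) + STp.2 - 1/2) STp.1) (STp.2 - 1)

/-- Extension to `V = F ⊗ Λ ⊗ ℂ[ℤα]` of an operator `e` on the Fock factor,
i.e. `e ⊗ 1 ⊗ 1`. -/
noncomputable def extF (e : EndF) : VV → VV := fun u =>
  u.sum fun STp f => Finsupp.single STp (e f)

/-- The operator `Z⁺(m) = Σ_{a,b≥0} (d⁻_a ⊗ 1 ⊗ 1) ∘ X(m+a-b) ∘ (c⁻_b ⊗ 1 ⊗ 1)` on `V`,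
the coefficient of `z^{-m}` in `E⁻₊(z) X(z) E⁻₋(z)` (only finitely many summands act
nontrivially on each vector). -/
noncomputable def ZplusV (m : ℤ) : VV → VV := fun u =>
  ∑ᶠ ab : ℕ × ℕ,
    extF (dOp false ab.1) (Xop (m + (ab.1 : ℤ) - (ab.2 : ℤ)) (extF (cOp false ab.2) u))

/-- The operator `Z⁻(m) = Σ_{a,b≥0} (d⁺_a ⊗ 1 ⊗ 1) ∘ Y(m+a-b) ∘ (c⁺_b ⊗ 1 ⊗ 1)` on `V`,
the coefficient of `z^{-m}` in `E⁺₊(z) Y(z) E⁺₋(z)`. -/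
noncomputable def ZminusV (m : ℤ) : VV → VV := fun u =>
  ∑ᶠ ab : ℕ × ℕ,
    extF (dOp true ab.1) (Yop (m + (ab.1 : ℤ) - (ab.2 : ℤ)) (extF (cOp true ab.2) u))

/-- `Ncount j` is the number of quadruples `(a, S, T, p)` with `a : ℤ_{≥1} → ℤ_{≥0}`
finitely supported, `S, T` finite subsets of the positive integers and `p ∈ ℤ`,
satisfying `2 Σ_{n≥1} n a(n) + 2 (Σ_{s∈S} s + Σ_{t∈T} t) + p² = j`; this is the
dimension of the eigenspace of `d` with eigenvalue `-j/2` on `V`. -/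
noncomputable def Ncount (j : ℕ) : ℕ :=
  Nat.card {q : (ℕ+ →₀ ℕ) × Finset ℕ+ × Finset ℕ+ × ℤ //
    2 * (q.1.sum fun n a => (n : ℤ) * a) +
      2 * ((∑ s ∈ q.2.1, (s : ℤ)) + ∑ t ∈ q.2.2.1, (t : ℤ)) + q.2.2.2 ^ 2 = (j : ℤ)}

/-!
Every summand of `X(m)` and `Y(m)` on `1 ⊗ v_{S,T} ⊗ e^{pα}` contains some `c^±_k 1`; for `k ≥ 1`
this vanishes, since `c^±_k` is a polynomial without constant term in derivations. For `k = 0` the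
fermionic index is at least `-1/2` as soon as `p ≤ m` (for `X`) or `0 ≤ m + p` (for `Y`), and in
that range `A(·)` kills `v_{S,∅}`, whose support contains every half-integer `≥ -1/2`, while
`A*(·)` kills `v_{∅,T}`, whose only sites it could remove are `±1/2`.
-/

lemma coeff_pow_apply_eq_zero {R M : Type*} [CommSemiring R] [AddCommMonoid M] [Module R M]
    {g : PowerSeries (Module.End R M)} {x : M} (hg : ∀ n, PowerSeries.coeff n g x = 0)
    {j : ℕ} (hj : j ≠ 0) (k : ℕ) : PowerSeries.coeff k (g ^ j) x = 0 := by
  obtain ⟨i, rfl⟩ := Nat.exists_eq_succ_of_ne_zero hj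
  rw [pow_succ, PowerSeries.coeff_mul, LinearMap.coe_sum, Finset.sum_apply]
  exact Finset.sum_eq_zero fun p _ => by rw [Module.End.mul_apply, hg, map_zero]

lemma expCoeff_apply_eq_zero {g : PowerSeries EndF} {f : Fock}
    (hg : ∀ n, PowerSeries.coeff n g f = 0) {k : ℕ} (hk : k ≠ 0) : expCoeff g k f = 0 := by
  rw [expCoeff, LinearMap.coe_sum, Finset.sum_apply]
  refine Finset.sum_eq_zero fun j _ => ?_
  rcases eq_or_ne j 0 with rfl | hj
  · simp [PowerSeries.coeff_one, hk]
  · rw [LinearMap.smul_apply, coeff_pow_apply_eq_zero hg hj, smul_zero]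

lemma cSeries_coeff_apply_one (ε : Bool) (n : ℕ) :
    PowerSeries.coeff n (cSeries ε) (1 : Fock) = 0 := by
  rw [cSeries, PowerSeries.coeff_mk]
  split_ifs with hn
  · change sgn ε • (2 : ℂ) • pderiv (R := ℂ) (σ := ℕ+) ⟨n, hn⟩ 1 = 0
    rw [Derivation.map_one_eq_zero, smul_zero, smul_zero]
  · rfl

lemma cOp_apply_one (ε : Bool) {k : ℕ} (hk : k ≠ 0) : cOp ε k (1 : Fock) = 0 :=
  expCoeff_apply_eq_zero (cSeries_coeff_apply_one ε) hk

lemma emb_zero_left (p : ℤ) (f : Fock) : emb 0 p f = 0 := by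
  simp [emb]

lemma emb_zero_right (w : Wedge) (p : ℤ) : emb w p 0 = 0 := by
  simp [emb]

lemma Abasis_eq_zero_of_neg_one_le {m : ℚ} (hm : -1 ≤ m) (S : Finset ℕ+) :
    Abasis m (S, ∅) = 0 := by
  have : (-1 : ℤ) ≤ ⌊m⌋ := Int.le_floor.2 (by exact_mod_cast hm)
  simp [Abasis, show ¬ ⌊m⌋ ≤ -2 by omega]
  intro _ _ h
  exact absurd h (Finset.notMem_empty _)

lemma AstarBasis_eq_zero_of_neg_one_le {m : ℚ} (hm : -1 ≤ m) (T : Finset ℕ+) :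
    AstarBasis m (∅, T) = 0 := by
  have : (-1 : ℤ) ≤ ⌊m⌋ := Int.le_floor.2 (by exact_mod_cast hm)
  simp [AstarBasis, show ¬ ⌊m⌋ ≤ -2 by omega]
  intro _ _ h
  exact absurd h (Finset.notMem_empty _)

lemma Xop_single_one_eq_zero {m p : ℤ} (hpm : p ≤ m) (S : Finset ℕ+) :
    Xop m (Finsupp.single ((S, ∅), p) 1) = 0 := by
  rw [Xop, Finsupp.sum_single_index (by simp [emb_zero_right])]
  refine finsum_eq_zero_of_forall_eq_zero fun ⟨l, k⟩ => ?_
  rcases eq_or_ne k 0 with rfl | hk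
  · have : (-1 : ℚ) ≤ m + l - (0 : ℕ) - p - 1 / 2 := by
      have : (p : ℚ) ≤ m := by exact_mod_cast hpm
      push_cast; linarith [l.cast_nonneg (α := ℚ)]
    rw [Abasis_eq_zero_of_neg_one_le this, emb_zero_left]
  · rw [cOp_apply_one _ hk, map_zero, emb_zero_right]

lemma Yop_single_one_eq_zero {m p : ℤ} (hmp : 0 ≤ m + p) (T : Finset ℕ+) :
    Yop m (Finsupp.single ((∅, T), p) 1) = 0 := by
  rw [Yop, Finsupp.sum_single_index (by simp [emb_zero_right])]
  refine finsum_eq_zero_of_forall_eq_zero fun ⟨l, k⟩ => ?_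
  rcases eq_or_ne k 0 with rfl | hk
  · have : (-1 : ℚ) ≤ m + l - (0 : ℕ) + p - 1 / 2 := by
      have : (0 : ℚ) ≤ m + p := by exact_mod_cast hmp
      push_cast; linarith [l.cast_nonneg (α := ℚ)]
    rw [AstarBasis_eq_zero_of_neg_one_le this, emb_zero_left]
  · rw [cOp_apply_one _ hk, map_zero, emb_zero_right]

lemma HVop_zero_single (STp : (Finset ℕ+ × Finset ℕ+) × ℤ) (f : Fock) :
    HVop 0 (Finsupp.single STp f) = (2 * STp.2 : ℂ) • Finsupp.single STp f := by
  rw [HVop, Finsupp.sum_single_index (by simp), Finsupp.smul_single, if_pos rfl]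

lemma dV_single_one (ST : Finset ℕ+ × Finset ℕ+) (p : ℤ) :
    dV (Finsupp.single (ST, p) 1) =
      ((-degWedge ST - (p : ℚ) ^ 2 / 2 : ℚ) : ℂ) • Finsupp.single (ST, p) 1 := by
  rw [dV, Finsupp.sum_single_index (by simp), Finsupp.smul_single, ← C_1, support_C,
    if_neg one_ne_zero, Finset.sum_singleton, coeff_C, if_pos rfl]
  simp [wtMon, C_eq_smul_one]

theorem statement12 :
    ∀ v1 : VV, v1 = Finsupp.single ((∅, ∅), -1) 1 →
      Xop 0 v1 = 0 ∧ Yop 1 v1 = 0 ∧ Xop (-1) v1 = 0 ∧ HVop 0 v1 = (-2 : ℂ) • v1 ∧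
      dV v1 = (-(1/2) : ℂ) • v1 ∧ -(HVop 0 v1) + (-2 : ℂ) • v1 = 0 := by
  rintro v1 rfl
  have hH : HVop 0 (Finsupp.single ((∅, ∅), -1) (1 : Fock)) =
      (-2 : ℂ) • Finsupp.single ((∅, ∅), -1) 1 := by
    rw [HVop_zero_single]; norm_num
  refine ⟨Xop_single_one_eq_zero (by norm_num) _, Yop_single_one_eq_zero (by norm_num) _,
    Xop_single_one_eq_zero le_rfl _, hH, ?_, by rw [hH, neg_add_cancel]⟩
  rw [dV_single_one]
  norm_num [degWedge]
end

section
/- For all m, n ∈ ℤ, every pair (S,T) of finite subsets of the positive integers, and every p ∈ ℤ: (Z⁺(m)Z⁻(n) − Z⁺(m−1)Z⁻(n+1) − Z⁻(n)Z⁺(m) + Z⁻(n−1)Z⁺(m+1))(v_{S,T} ⊗ e^{pα}) = (2p + 2n)·δ_{m+n,0}·(v_{S,T} ⊗ e^{pα}). (This is the componentwise form of the generalized commutator relation Z⁺(z)Z⁻(w)(1−w/z) − Z⁻(w)Z⁺(z)(1−z/w) = H(0)δ(w/z) − 2w∂_w δ(w/z), where H(0) acts on e^{pα} by 2p.) -/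
open MvPolynomial

/-!
Group the four terms as `Z⁺(m)Z⁻(n) + Z⁻(n-1)Z⁺(m+1)` and `Z⁺(m-1)Z⁻(n+1) + Z⁻(n)Z⁺(m)`.
On `v_{S,T} ⊗ e^{pα}` both pairs return to `e^{pα}` and act on `Λ` as anticommutators
`{A(a+1/2), A*(b+1/2)}`, with `(a, b) = (m-p, n+p-1)` and `(m-p-1, n+p)` respectively.
These anticommutators are `δ_{a+b+1,0} · a b`: if the two operators touch different positions,
the two orders of applying them differ by a single transposition in the sign count, and if
`a + b + 1 = 0` exactly one order survives, creating and destroying the same position with the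
same sign twice. For `m + n = 0` the difference `(m-p)(n+p-1) - (m-p-1)(n+p)` is `2p + 2n`.
-/

lemma den_intCast_add_half (a : ℤ) : ((a : ℚ) + 1/2).den = 2 := by
  rw [Rat.intCast_add_den]; norm_num

lemma floor_intCast_add_half (a : ℤ) : ⌊(a : ℚ) + 1/2⌋ = a := by
  rw [add_comm, Int.floor_add_intCast]; norm_num

lemma exists_pnat_eq_or_eq_neg_sub_one {a : ℤ} (h : ¬(a = 0 ∨ a = -1)) :
    (∃ k : ℕ+, (k : ℤ) = a) ∨ (∃ s : ℕ+, (s : ℤ) = -a - 1) := by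
  by_cases h₁ : 1 ≤ a
  · exact Or.inl ⟨⟨a.toNat, by omega⟩, Int.toNat_of_nonneg (by omega)⟩
  · exact Or.inr ⟨⟨(-a - 1).toNat, by omega⟩, Int.toNat_of_nonneg (by omega)⟩

lemma PNat.mk_toNat {n : ℤ} {k : ℕ+} (hk : (k : ℤ) = n) (h : 0 < n.toNat) :
    (⟨n.toNat, h⟩ : ℕ+) = k :=
  PNat.eq (by simp [← hk])

lemma PNat.card_filter_lt_le (T : Finset ℕ+) (k : ℕ+) : (T.filter (· < k)).card ≤ k :=
  calc (T.filter (· < k)).card ≤ (Finset.Iio k).card :=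
        Finset.card_le_card fun x hx => Finset.mem_Iio.mpr (Finset.mem_filter.mp hx).2
    _ ≤ k := by rw [Finset.Iio_eq_Ico, PNat.card_Ico]; omega

lemma neg_one_pow_tsub {R : Type*} [Monoid R] [HasDistribNeg R] {n c : ℕ} (h : c ≤ n) :
    (-1 : R) ^ (n - c) = (-1) ^ (n + c) := by
  rw [show n + c = (n - c) + 2 * c by omega, pow_add, pow_mul, neg_one_sq, one_pow, mul_one]

lemma Finset.card_filter_insert_of_notMem {α : Type*} [DecidableEq α] (p : α → Prop)
    [DecidablePred p] {s : Finset α} {a : α} (ha : a ∉ s) :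
    ((insert a s).filter p).card = (s.filter p).card + if p a then 1 else 0 := by
  rw [Finset.filter_insert]
  split_ifs
  · exact Finset.card_insert_of_notMem fun h => ha (Finset.mem_of_mem_filter a h)
  · rfl

/-- The four counts are the sign exponents picked up when `j` is inserted into `X` and `k` is
erased from it, in the two possible orders; the two orders therefore differ by a sign. -/
lemma odd_card_filter_insert_erase {α : Type*} [DecidableEq α] (r : α → α → Prop)
    [DecidableRel r] [Std.Trichotomous r] [Std.Asymm r] {X : Finset α} {j k : α}
    (hj : j ∉ X) (hk : k ∈ X) :
    Odd (((insert j X).filter (r · k)).card + (X.filter (r · k)).card +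
      (X.filter (r · j)).card + ((X.erase k).filter (r · j)).card) := by
  have hins := Finset.card_filter_insert_of_notMem (r · k) hj
  have hers := Finset.card_filter_insert_of_notMem (r · j) (Finset.notMem_erase k X)
  rw [Finset.insert_erase hk] at hers
  have hne : j ≠ k := fun h => hj (h ▸ hk)
  have hasymm := Std.Asymm.asymm (r := r) j k
  have htri := Std.Trichotomous.trichotomous (r := r) j k
  rw [hins, hers, Nat.odd_iff]
  split_ifs <;> first | omega | tauto

lemma smul_smul_neg_one_pow_add_eq_zero {R M : Type*} [CommRing R] [AddCommGroup M]
    [Module R M] (a b : R) (v : M) {e₁ e₂ e₃ e₄ : ℕ} (h : Odd (e₁ + e₂ + e₃ + e₄)) :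
    (a * (-1) ^ e₁) • (b * (-1) ^ e₂) • v + (b * (-1) ^ e₃) • (a * (-1) ^ e₄) • v = 0 := by
  have hodd : (-1 : R) ^ (e₁ + e₂) * (-1) ^ (e₃ + e₄) = -1 := by
    rw [← pow_add, ← add_assoc, h.neg_one_pow]
  have hsq : (-1 : R) ^ (e₁ + e₂) * (-1) ^ (e₁ + e₂) = 1 := by
    rw [← mul_pow]; simp
  rw [smul_smul, smul_smul, ← add_smul]
  convert zero_smul R v
  simp only [pow_add] at hodd hsq
  linear_combination (a * b * ((-1) ^ e₁ * (-1) ^ e₂)) * hodd -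
    (a * b * ((-1) ^ e₃ * (-1) ^ e₄)) * hsq

lemma smul_smul_neg_one_pow_self {R M : Type*} [CommRing R] [AddCommGroup M]
    [Module R M] (a b : R) (v : M) (e : ℕ) :
    (a * (-1) ^ e) • (b * (-1) ^ e) • v = (a * b) • v := by
  have hsq : (-1 : R) ^ e * (-1) ^ e = 1 := by rw [← mul_pow]; simp
  rw [smul_smul]
  congr 1
  linear_combination (a * b) * hsq

lemma Abasis_of_pos {a : ℤ} {k : ℕ+} (hk : (k : ℤ) = a) (S T : Finset ℕ+) :
    Abasis ((a : ℚ) + 1/2) (S, T) =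
      if k ∈ T then ((a : ℂ) * (-1) ^ (S.card + k + (T.filter (· < k)).card)) •
        Finsupp.single (S, T.erase k) 1 else 0 := by
  have ha : 1 ≤ a := by have := k.pos; omega
  -- `⌊·⌋` sits under the proof-carrying constructor of `ℕ+`, so the whole subterm is replaced
  simp only [Abasis, den_intCast_add_half, reduceIte,
    PNat.mk_toNat (n := ⌊(a : ℚ) + 1/2⌋) (by rw [floor_intCast_add_half, hk])]
  simp only [floor_intCast_add_half, dif_pos ha, show a.toNat = k by omega,
    neg_one_pow_tsub ((PNat.card_filter_lt_le T k).trans (Nat.le_add_left _ _))]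

lemma Abasis_of_neg {a : ℤ} {s : ℕ+} (hs : (s : ℤ) = -a - 1) (S T : Finset ℕ+) :
    Abasis ((a : ℚ) + 1/2) (S, T) =
      if s ∈ S then 0 else ((a : ℂ) * (-1) ^ (S.filter (s < ·)).card) •
        Finsupp.single (insert s S, T) 1 := by
  have ha : a ≤ -2 := by have := s.pos; omega
  simp only [Abasis, den_intCast_add_half, reduceIte,
    PNat.mk_toNat (n := -⌊(a : ℚ) + 1/2⌋ - 1) (by rw [floor_intCast_add_half, hs])]
  simp only [floor_intCast_add_half, dif_neg (show ¬ 1 ≤ a by omega), dif_pos ha]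

lemma Abasis_of_degenerate {a : ℤ} (ha : a = 0 ∨ a = -1) (ST : Finset ℕ+ × Finset ℕ+) :
    Abasis ((a : ℚ) + 1/2) ST = 0 := by
  simp only [Abasis, den_intCast_add_half, floor_intCast_add_half, reduceIte]
  rw [dif_neg (by omega), dif_neg (by omega)]

lemma AstarBasis_of_pos {b : ℤ} {s : ℕ+} (hs : (s : ℤ) = b) (S T : Finset ℕ+) :
    AstarBasis ((b : ℚ) + 1/2) (S, T) =
      if s ∈ S then ((b : ℂ) * (-1) ^ (S.filter (s < ·)).card) •
        Finsupp.single (S.erase s, T) 1 else 0 := by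
  have hb : 1 ≤ b := by have := s.pos; omega
  simp only [AstarBasis, den_intCast_add_half, reduceIte,
    PNat.mk_toNat (n := ⌊(b : ℚ) + 1/2⌋) (by rw [floor_intCast_add_half, hs])]
  simp only [floor_intCast_add_half, dif_pos hb]

lemma AstarBasis_of_neg {b : ℤ} {k : ℕ+} (hk : (k : ℤ) = -b - 1) (S T : Finset ℕ+) :
    AstarBasis ((b : ℚ) + 1/2) (S, T) =
      if k ∈ T then 0 else ((b : ℂ) * (-1) ^ (S.card + k + (T.filter (· < k)).card)) •
        Finsupp.single (S, insert k T) 1 := by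
  have hb : b ≤ -2 := by have := k.pos; omega
  simp only [AstarBasis, den_intCast_add_half, reduceIte,
    PNat.mk_toNat (n := -⌊(b : ℚ) + 1/2⌋ - 1) (by rw [floor_intCast_add_half, hk])]
  simp only [floor_intCast_add_half, dif_neg (show ¬ 1 ≤ b by omega), dif_pos hb,
    show (-b - 1).toNat = k by omega,
    neg_one_pow_tsub ((PNat.card_filter_lt_le T k).trans (Nat.le_add_left _ _))]

lemma AstarBasis_of_degenerate {b : ℤ} (hb : b = 0 ∨ b = -1) (ST : Finset ℕ+ × Finset ℕ+) :
    AstarBasis ((b : ℚ) + 1/2) ST = 0 := by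
  simp only [AstarBasis, den_intCast_add_half, floor_intCast_add_half, reduceIte]
  rw [dif_neg (by omega), dif_neg (by omega)]

lemma Aop_single (q : ℚ) (ST : Finset ℕ+ × Finset ℕ+) (c : ℂ) :
    Aop q (Finsupp.single ST c) = c • Abasis q ST := by
  simp [Aop]

lemma AstarOp_single (q : ℚ) (ST : Finset ℕ+ × Finset ℕ+) (c : ℂ) :
    AstarOp q (Finsupp.single ST c) = c • AstarBasis q ST := by
  simp [AstarOp]

lemma Aop_of_degenerate {a : ℤ} (ha : a = 0 ∨ a = -1) : Aop ((a : ℚ) + 1/2) = 0 :=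
  Finsupp.lhom_ext fun ST c => by rw [Aop_single, Abasis_of_degenerate ha, smul_zero]; rfl

lemma AstarOp_of_degenerate {b : ℤ} (hb : b = 0 ∨ b = -1) : AstarOp ((b : ℚ) + 1/2) = 0 :=
  Finsupp.lhom_ext fun ST c => by rw [AstarOp_single, AstarBasis_of_degenerate hb, smul_zero]; rfl

noncomputable def anticommBasis (a b : ℤ) (ST : Finset ℕ+ × Finset ℕ+) : Wedge :=
  Aop ((a : ℚ) + 1/2) (AstarBasis ((b : ℚ) + 1/2) ST) +
    AstarOp ((b : ℚ) + 1/2) (Abasis ((a : ℚ) + 1/2) ST)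

lemma anticommBasis_of_degenerate {a b : ℤ} (h : (a = 0 ∨ a = -1) ∨ (b = 0 ∨ b = -1))
    (S T : Finset ℕ+) :
    anticommBasis a b (S, T) =
      (if a + b + 1 = 0 then (a * b : ℂ) else 0) • Finsupp.single (S, T) 1 := by
  have hab : (if a + b + 1 = 0 then (a * b : ℂ) else 0) = 0 := by
    split_ifs
    · rcases (show a = 0 ∨ b = 0 by omega) with rfl | rfl <;> simp
    · rfl
  rw [hab, zero_smul, anticommBasis]
  rcases h with ha | hb
  · rw [Abasis_of_degenerate ha, Aop_of_degenerate ha, map_zero, LinearMap.zero_apply, add_zero]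
  · rw [AstarBasis_of_degenerate hb, AstarOp_of_degenerate hb, map_zero, LinearMap.zero_apply,
      add_zero]

lemma anticommBasis_of_pos_pos {a b : ℤ} {k j : ℕ+} (hk : (k : ℤ) = a) (hj : (j : ℤ) = b)
    (S T : Finset ℕ+) :
    anticommBasis a b (S, T) =
      (if a + b + 1 = 0 then (a * b : ℂ) else 0) • Finsupp.single (S, T) 1 := by
  have := k.pos
  have := j.pos
  rw [if_neg (by omega), zero_smul, anticommBasis, AstarBasis_of_pos hj, Abasis_of_pos hk]
  by_cases hkT : k ∈ T <;> by_cases hjS : j ∈ S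
  all_goals simp only [hkT, hjS, if_true, if_false, map_zero, add_zero, map_smul, Aop_single,
    AstarOp_single, one_smul, Abasis_of_pos hk, AstarBasis_of_pos hj, smul_zero]
  apply smul_smul_neg_one_pow_add_eq_zero
  have := Finset.card_erase_add_one hjS
  rw [Nat.odd_iff]
  omega

lemma anticommBasis_of_pos_neg {a b : ℤ} {k j : ℕ+} (hk : (k : ℤ) = a) (hj : (j : ℤ) = -b - 1)
    (S T : Finset ℕ+) :
    anticommBasis a b (S, T) =
      (if a + b + 1 = 0 then (a * b : ℂ) else 0) • Finsupp.single (S, T) 1 := by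
  rw [anticommBasis, AstarBasis_of_neg hj, Abasis_of_pos hk]
  by_cases hab : a + b + 1 = 0
  · obtain rfl : k = j := PNat.eq (by omega)
    rw [if_pos hab]
    by_cases hkT : k ∈ T
    · simp only [hkT, if_true, if_false, map_zero, zero_add, map_smul, AstarOp_single, one_smul,
        AstarBasis_of_neg hj, Finset.notMem_erase, Finset.insert_erase hkT, Finset.filter_erase,
        Finset.erase_eq_of_notMem, Finset.mem_filter, lt_irrefl, and_false, not_false_eq_true]
      exact smul_smul_neg_one_pow_self _ _ _ _
    · simp only [hkT, if_false, map_zero, add_zero, map_smul, Aop_single, one_smul,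
        Abasis_of_pos hk, Finset.mem_insert_self, Finset.erase_insert hkT, Finset.filter_insert,
        lt_irrefl, if_true]
      rw [smul_smul_neg_one_pow_self, mul_comm]
  · have hkj : k ≠ j := by rintro rfl; omega
    rw [if_neg hab, zero_smul]
    by_cases hkT : k ∈ T <;> by_cases hjT : j ∈ T
    all_goals simp only [hkT, hjT, if_true, if_false, map_zero, add_zero, map_smul,
      Aop_single, AstarOp_single, one_smul, Abasis_of_pos hk, AstarBasis_of_neg hj,
      Finset.mem_insert, Finset.mem_erase, hkj, Ne.symm hkj, Ne, not_false_eq_true, true_and,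
      false_or, or_false, smul_zero]
    rw [Finset.erase_insert_of_ne (Ne.symm hkj)]
    apply smul_smul_neg_one_pow_add_eq_zero
    have := odd_card_filter_insert_erase (· < ·) hjT hkT
    rw [Nat.odd_iff] at this ⊢
    omega

lemma anticommBasis_of_neg_pos {a b : ℤ} {s j : ℕ+} (hs : (s : ℤ) = -a - 1) (hj : (j : ℤ) = b)
    (S T : Finset ℕ+) :
    anticommBasis a b (S, T) =
      (if a + b + 1 = 0 then (a * b : ℂ) else 0) • Finsupp.single (S, T) 1 := by
  rw [anticommBasis, AstarBasis_of_pos hj, Abasis_of_neg hs]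
  by_cases hab : a + b + 1 = 0
  · obtain rfl : s = j := PNat.eq (by omega)
    rw [if_pos hab]
    by_cases hsS : s ∈ S
    · simp only [hsS, if_true, if_false, map_zero, add_zero, map_smul, Aop_single, one_smul,
        Abasis_of_neg hs, Finset.notMem_erase, Finset.insert_erase hsS, Finset.filter_erase,
        Finset.erase_eq_of_notMem, Finset.mem_filter, lt_irrefl, and_false, not_false_eq_true]
      rw [smul_smul_neg_one_pow_self, mul_comm]
    · simp only [hsS, if_false, map_zero, zero_add, map_smul, AstarOp_single, one_smul,
        AstarBasis_of_pos hj, Finset.mem_insert_self, Finset.erase_insert hsS,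
        Finset.filter_insert, lt_irrefl, if_true]
      exact smul_smul_neg_one_pow_self _ _ _ _
  · have hsj : s ≠ j := by rintro rfl; omega
    rw [if_neg hab, zero_smul]
    by_cases hsS : s ∈ S <;> by_cases hjS : j ∈ S
    all_goals simp only [hsS, hjS, if_true, if_false, map_zero, add_zero, map_smul,
      Aop_single, AstarOp_single, one_smul, Abasis_of_neg hs, AstarBasis_of_pos hj,
      Finset.mem_insert, Finset.mem_erase, hsj, Ne.symm hsj, Ne, not_false_eq_true, true_and,
      false_or, or_false, smul_zero]
    rw [Finset.erase_insert_of_ne hsj]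
    apply smul_smul_neg_one_pow_add_eq_zero
    have := odd_card_filter_insert_erase (· > ·) hsS hjS
    simp only [gt_iff_lt, Nat.odd_iff] at this ⊢
    omega

lemma anticommBasis_of_neg_neg {a b : ℤ} {s k : ℕ+} (hs : (s : ℤ) = -a - 1)
    (hk : (k : ℤ) = -b - 1) (S T : Finset ℕ+) :
    anticommBasis a b (S, T) =
      (if a + b + 1 = 0 then (a * b : ℂ) else 0) • Finsupp.single (S, T) 1 := by
  have := k.pos
  have := s.pos
  rw [if_neg (by omega), zero_smul, anticommBasis, AstarBasis_of_neg hk, Abasis_of_neg hs]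
  by_cases hkT : k ∈ T <;> by_cases hsS : s ∈ S
  all_goals simp only [hkT, hsS, if_true, if_false, map_zero, add_zero, map_smul,
    Aop_single, AstarOp_single, one_smul, Abasis_of_neg hs, AstarBasis_of_neg hk, smul_zero]
  apply smul_smul_neg_one_pow_add_eq_zero
  have := Finset.card_insert_of_notMem hsS
  rw [Nat.odd_iff]
  omega

theorem anticommBasis_eq (a b : ℤ) (S T : Finset ℕ+) :
    anticommBasis a b (S, T) =
      (if a + b + 1 = 0 then (a * b : ℂ) else 0) • Finsupp.single (S, T) 1 := by
  by_cases h : (a = 0 ∨ a = -1) ∨ (b = 0 ∨ b = -1)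
  · exact anticommBasis_of_degenerate h S T
  rw [not_or] at h
  rcases exists_pnat_eq_or_eq_neg_sub_one h.1 with ⟨k, hk⟩ | ⟨s, hs⟩ <;>
    rcases exists_pnat_eq_or_eq_neg_sub_one h.2 with ⟨j, hj⟩ | ⟨j, hj⟩
  exacts [anticommBasis_of_pos_pos hk hj S T, anticommBasis_of_pos_neg hk hj S T,
    anticommBasis_of_neg_pos hs hj S T, anticommBasis_of_neg_neg hs hj S T]

lemma embVac_eq_lmapDomain (w : Wedge) (p : ℤ) :
    embVac w p = Finsupp.lmapDomain ℂ ℂ (fun ST => (ST, p)) w := rfl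

lemma embVac_add (w w' : Wedge) (p : ℤ) : embVac (w + w') p = embVac w p + embVac w' p := by
  simp only [embVac_eq_lmapDomain, map_add]

lemma Zplus_single (m : ℤ) (ST : Finset ℕ+ × Finset ℕ+) (p : ℤ) :
    Zplus m (Finsupp.single (ST, p) 1) = embVac (Abasis ((m : ℚ) - p - 1/2) ST) (p + 1) := by
  rw [Zplus, Finsupp.sum_single_index (by rw [zero_smul]), one_smul]

lemma Zminus_single (n : ℤ) (ST : Finset ℕ+ × Finset ℕ+) (p : ℤ) :
    Zminus n (Finsupp.single (ST, p) 1) = embVac (AstarBasis ((n : ℚ) + p - 1/2) ST) (p - 1) := by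
  rw [Zminus, Finsupp.sum_single_index (by rw [zero_smul]), one_smul]

lemma Zplus_embVac (m : ℤ) (w : Wedge) (p : ℤ) :
    Zplus m (embVac w p) = embVac (Aop ((m : ℚ) - p - 1/2) w) (p + 1) := by
  rw [Zplus, embVac_eq_lmapDomain, Finsupp.lmapDomain_apply,
    Finsupp.sum_mapDomain_index (fun _ => by rw [zero_smul]) (fun _ _ _ => by rw [add_smul])]
  simp only [embVac_eq_lmapDomain, Aop, Finsupp.lsum_apply, map_finsuppSum, map_smul,
    LinearMap.toSpanSingleton_apply]

lemma Zminus_embVac (n : ℤ) (w : Wedge) (p : ℤ) :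
    Zminus n (embVac w p) = embVac (AstarOp ((n : ℚ) + p - 1/2) w) (p - 1) := by
  rw [Zminus, embVac_eq_lmapDomain, Finsupp.lmapDomain_apply,
    Finsupp.sum_mapDomain_index (fun _ => by rw [zero_smul]) (fun _ _ _ => by rw [add_smul])]
  simp only [embVac_eq_lmapDomain, AstarOp, Finsupp.lsum_apply, map_finsuppSum, map_smul,
    LinearMap.toSpanSingleton_apply]

lemma Zplus_Zminus_add_Zminus_Zplus_single (m n : ℤ) (S T : Finset ℕ+) (p : ℤ) :
    Zplus m (Zminus n (Finsupp.single ((S, T), p) 1)) +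
        Zminus (n - 1) (Zplus (m + 1) (Finsupp.single ((S, T), p) 1)) =
      embVac (anticommBasis (m - p) (n + p - 1) (S, T)) p := by
  rw [Zminus_single, Zplus_embVac, Zplus_single, Zminus_embVac, sub_add_cancel,
    add_sub_cancel_right, anticommBasis, embVac_add]
  congr 4 <;> push_cast <;> ring

theorem statement15 (m n : ℤ) (S T : Finset ℕ+) (p : ℤ) (w : Vac)
    (hw : w = Finsupp.single ((S, T), p) 1) :
    Zplus m (Zminus n w) - Zplus (m - 1) (Zminus (n + 1) w) - Zminus n (Zplus m w) +
        Zminus (n - 1) (Zplus (m + 1) w) =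
      if m + n = 0 then ((2 * p + 2 * n : ℤ) : ℂ) • w else 0 := by
  subst hw
  have h₁ := Zplus_Zminus_add_Zminus_Zplus_single m n S T p
  have h₂ := Zplus_Zminus_add_Zminus_Zplus_single (m - 1) (n + 1) S T p
  rw [add_sub_cancel_right, sub_add_cancel] at h₂
  rw [show ∀ x₁ x₂ x₃ x₄ : Vac, x₁ - x₂ - x₃ + x₄ = (x₁ + x₄) - (x₂ + x₃) by intros; abel,
    h₁, h₂, anticommBasis_eq, anticommBasis_eq, show m - p + (n + p - 1) + 1 = m + n by ring,
    show m - 1 - p + (n + 1 + p - 1) + 1 = m + n by ring, embVac_eq_lmapDomain,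
    embVac_eq_lmapDomain, ← map_sub, ← sub_smul, map_smul, Finsupp.lmapDomain_apply,
    Finsupp.mapDomain_single]
  split_ifs with h
  · have hmn : (m : ℂ) + n = 0 := mod_cast h
    congr 1
    push_cast
    linear_combination -hmn
  · simp
end
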